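/- Let Q be a finite directed graph. Then there exists a family {φ_t}_{t ∈ [0,1]} of completely contractive homomorphisms φ_t: OA(Q) → OA(Q), determined by φ_t(ι(e)) = t·ι(e) for edges e and φ_t(ι(v)) = ι(v) for vertices v, such that φ₁ = id_{OA(Q)}, the range of φ₀ is OA(V(Q)) (the subalgebra generated by the vertices), and t ↦ φ_t(a) is norm continuous for every a ∈ OA(Q). -/

import Mathlib

noncomputable section

open scoped Classical

/-! ## Operator algebras, concretely represented -/

/-- A (concrete) operator algebra: a norm-closed subalgebra of the bounded
operators on a complex Hilbert space. -/
structure OpAlg where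
  H : Type
  [nacg : NormedAddCommGroup H]
  [ips : InnerProductSpace ℂ H]
  [cs : CompleteSpace H]
  carrier : NonUnitalSubalgebra ℂ (H →L[ℂ] H)
  isClosed : IsClosed (carrier : Set (H →L[ℂ] H))

attribute [instance] OpAlg.nacg OpAlg.ips OpAlg.cs

/-- The amplification of an `n × n` matrix of operators on `H` to an operator on
`H ⊕₂ ⋯ ⊕₂ H` (`n` summands, with the Hilbert space norm). -/
def matAmp {H : Type} [NormedAddCommGroup H] [InnerProductSpace ℂ H]
    {n : ℕ} (a : Matrix (Fin n) (Fin n) (H →L[ℂ] H)) :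
    (PiLp 2 fun _ : Fin n => H) →L[ℂ] (PiLp 2 fun _ : Fin n => H) :=
  ((PiLp.continuousLinearEquiv 2 ℂ fun _ : Fin n => H).symm.toContinuousLinearMap.comp
    (ContinuousLinearMap.pi fun i => ∑ j, (a i j).comp (ContinuousLinearMap.proj j))).comp
    (PiLp.continuousLinearEquiv 2 ℂ fun _ : Fin n => H).toContinuousLinearMap

/-- The matrix norm of a matrix over a concrete operator algebra. -/
def matNorm (A : OpAlg) {n : ℕ} (a : Matrix (Fin n) (Fin n) A.carrier) : ℝ :=
  ‖matAmp fun i j => (a i j : A.H →L[ℂ] A.H)‖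

/-- A completely contractive homomorphism of operator algebras. -/
structure CCHom (A B : OpAlg) where
  toHom : A.carrier →ₙₐ[ℂ] B.carrier
  completelyContractive : ∀ (n : ℕ) (a : Matrix (Fin n) (Fin n) A.carrier),
    matNorm B (fun i j => toHom (a i j)) ≤ matNorm A a

/-- A completely isometric homomorphism. -/
def CCHom.CompletelyIsometric {A B : OpAlg} (φ : CCHom A B) : Prop :=
  ∀ (n : ℕ) (a : Matrix (Fin n) (Fin n) A.carrier),
    matNorm B (fun i j => φ.toHom (a i j)) = matNorm A a

/-- Two operator algebras are completely isometrically isomorphic if there is a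
bijective completely isometric homomorphism between them. -/
def CIIso (A B : OpAlg) : Prop :=
  ∃ φ : CCHom A B, Function.Bijective φ.toHom ∧ φ.CompletelyIsometric

/-! ## Directed graphs -/

/-- A directed graph: vertices, edges, and source and range maps. -/
structure DiGraph where
  V : Type
  E : Type
  s : E → V
  r : E → V

/-- A contractive representation of a directed graph in an operator algebra:
vertices go to (self-adjoint) projections, edges go to contractions, compatibly
with the range and source maps. -/
structure GraphRep (Q : DiGraph) (A : OpAlg) where
  v : Q.V → A.carrier
  e : Q.E → A.carrier
  idem : ∀ x, v x * v x = v x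
  selfAdjoint : ∀ x, IsSelfAdjoint (v x : A.H →L[ℂ] A.H)
  contractive : ∀ x, ‖(e x : A.H →L[ℂ] A.H)‖ ≤ 1
  range_mul : ∀ x, v (Q.r x) * e x = e x
  mul_source : ∀ x, e x * v (Q.s x) = e x

/-- The representation generates the operator algebra. -/
def GraphRep.Generates {Q : DiGraph} {A : OpAlg} (ρ : GraphRep Q A) : Prop :=
  closure ((NonUnitalAlgebra.adjoin ℂ (Set.range ρ.v ∪ Set.range ρ.e) :
    NonUnitalSubalgebra ℂ A.carrier) : Set A.carrier) = Set.univ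

/-- A homomorphism extends (intertwines) two representations of the same graph. -/
def ExtendsRep {Q : DiGraph} {A B : OpAlg} (ψ : CCHom A B)
    (ρ : GraphRep Q A) (σ : GraphRep Q B) : Prop :=
  (∀ x, ψ.toHom (ρ.v x) = σ.v x) ∧ (∀ x, ψ.toHom (ρ.e x) = σ.e x)

/-- `(A, ι)` is *the* universal operator algebra of the directed graph `Q`:
`ι` generates, and every contractive representation of `Q` factors uniquely
through a completely contractive homomorphism. -/
def IsUniversalOA (Q : DiGraph) (A : OpAlg) (ι : GraphRep Q A) : Prop :=
  ι.Generates ∧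
    ∀ (B : OpAlg) (σ : GraphRep Q B), ∃! ψ : CCHom A B, ExtendsRep ψ ι σ



set_option synthInstance.maxHeartbeats 1000000
set_option maxHeartbeats 2000000

lemma matAmp_apply {H : Type} [NormedAddCommGroup H] [InnerProductSpace ℂ H]
    {n : ℕ} (a : Matrix (Fin n) (Fin n) (H →L[ℂ] H))
    (x : PiLp 2 fun _ : Fin n => H) (i : Fin n) :
    matAmp a x i = ∑ j, a i j (x j) := by
  simp [matAmp, ContinuousLinearMap.sum_apply]

lemma piLp_norm_fin1 {H : Type} [NormedAddCommGroup H]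
    (x : PiLp 2 fun _ : Fin 1 => H) : ‖x‖ = ‖x 0‖ := by
  rw [PiLp.norm_eq_of_L2]
  simp [Real.sqrt_sq_eq_abs]

lemma matAmp_norm_fin1 {H : Type} [NormedAddCommGroup H] [InnerProductSpace ℂ H]
    (a : Matrix (Fin 1) (Fin 1) (H →L[ℂ] H)) :
    ‖matAmp a‖ = ‖a 0 0‖ := by
  apply le_antisymm
  · apply ContinuousLinearMap.opNorm_le_bound _ (norm_nonneg _)
    intro x
    rw [piLp_norm_fin1, piLp_norm_fin1, matAmp_apply]
    simpa using (a 0 0).le_opNorm (x 0)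
  · refine ContinuousLinearMap.opNorm_le_bound _ (ContinuousLinearMap.opNorm_nonneg _) fun y => ?_
    have h := (matAmp a).le_opNorm (WithLp.toLp 2 (fun _ => y : ∀ _ : Fin 1, H) : PiLp 2 fun _ : Fin 1 => H)
    rw [piLp_norm_fin1, piLp_norm_fin1, matAmp_apply] at h
    simpa using h

lemma matNorm_fin1 (A : OpAlg) (a : Matrix (Fin 1) (Fin 1) A.carrier) :
    matNorm A a = ‖a 0 0‖ := by
  have h : matNorm A a = ‖matAmp fun i j => (a i j : A.H →L[ℂ] A.H)‖ := rfl
  rw [h]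
  exact matAmp_norm_fin1 (H := A.H) (fun i j => (a i j : A.H →L[ℂ] A.H))

lemma CCHom.norm_apply_le {A B : OpAlg} (ψ : CCHom A B) (a : A.carrier) :
    ‖ψ.toHom a‖ ≤ ‖a‖ := by
  have h := ψ.completelyContractive 1 (fun _ _ => a)
  have e1 := matNorm_fin1 A (fun _ _ => a)
  have e2 := matNorm_fin1 B (fun i j => ψ.toHom ((fun _ _ => a : Matrix (Fin 1) (Fin 1) A.carrier) i j))
  rw [e1, e2] at h
  exact h

lemma CCHom.continuous {A B : OpAlg} (ψ : CCHom A B) : Continuous ψ.toHom := by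
  apply (LipschitzWith.of_dist_le_mul (K := 1) fun x y => ?_).continuous
  rw [dist_eq_norm, dist_eq_norm, NNReal.coe_one, one_mul, ← map_sub]
  exact ψ.norm_apply_le _

/-- **Statement 16.** For a finite directed graph `Q`, there is a point-norm continuous
family `{φ_t}_{t ∈ [0,1]}` of completely contractive endomorphisms of `OA(Q)`, with
`φ_t` determined by scaling the edge generators by `t` and fixing the vertex
generators, such that `φ₁` is the identity and the range of `φ₀` is `OA(V(Q))`,
the subalgebra generated by the vertices. -/
theorem homotopy_of_universalOA_onto_vertex_algebra
    (Q : DiGraph) (hV : Finite Q.V) (hE : Finite Q.E)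
    (A : OpAlg) (ι : GraphRep Q A) (hA : IsUniversalOA Q A ι) :
    ∃ φ : ℝ → CCHom A A,
      (∀ t ∈ Set.Icc (0 : ℝ) 1,
        (∀ x, (φ t).toHom (ι.e x) = (t : ℂ) • ι.e x) ∧
        (∀ x, (φ t).toHom (ι.v x) = ι.v x)) ∧
      (∀ a, (φ 1).toHom a = a) ∧
      (Set.range ⇑(φ 0).toHom =
        closure ((NonUnitalAlgebra.adjoin ℂ (Set.range ι.v) :
          NonUnitalSubalgebra ℂ A.carrier) : Set A.carrier)) ∧
      (∀ a : A.carrier, ContinuousOn (fun t => (φ t).toHom a) (Set.Icc (0 : ℝ) 1)) := by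
  classical
  -- clamp function
  set c : ℝ → ℝ := fun t => max 0 (min t 1) with hc
  have hc01 : ∀ t, 0 ≤ c t ∧ c t ≤ 1 := fun t =>
    ⟨le_max_left _ _, max_le (by norm_num) (min_le_right _ _)⟩
  have hcid : ∀ t ∈ Set.Icc (0:ℝ) 1, c t = t := fun t ht => by
    simp only [hc]; rw [min_eq_left ht.2, max_eq_right ht.1]
  have hccont : Continuous c := continuous_const.max (continuous_id.min continuous_const)
  -- the scaled representations
  have coe_smul : ∀ (z : ℂ) (a : A.carrier),
      ((z • a : A.carrier) : A.H →L[ℂ] A.H) = z • (a : A.H →L[ℂ] A.H) := fun z a => rfl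
  let σ : ℝ → GraphRep Q A := fun t =>
    { v := ι.v
      e := fun x => ((c t : ℂ)) • ι.e x
      idem := ι.idem
      selfAdjoint := ι.selfAdjoint
      contractive := fun x => by
        rw [coe_smul, norm_smul, Complex.norm_real, Real.norm_eq_abs, abs_of_nonneg (hc01 t).1]
        exact mul_le_one₀ (hc01 t).2 (norm_nonneg _) (ι.contractive x)
      range_mul := fun x => by rw [mul_smul_comm, ι.range_mul]
      mul_source := fun x => by rw [smul_mul_assoc, ι.mul_source] }
  let φ : ℝ → CCHom A A := fun t => (hA.2 A (σ t)).choose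
  have hφv : ∀ t x, (φ t).toHom (ι.v x) = ι.v x := fun t x =>
    (hA.2 A (σ t)).choose_spec.1.1 x
  have hφe : ∀ t x, (φ t).toHom (ι.e x) = ((c t : ℂ)) • ι.e x := fun t x =>
    (hA.2 A (σ t)).choose_spec.1.2 x
  refine ⟨φ, fun t ht => ⟨fun x => ?_, hφv t⟩, ?_, ?_, ?_⟩
  · rw [hφe, hcid t ht]
  · -- φ 1 = id
    have hc1 : c 1 = 1 := hcid 1 ⟨zero_le_one, le_refl 1⟩
    let idC : CCHom A A :=
      { toHom := NonUnitalAlgHom.id ℂ A.carrier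
        completelyContractive := fun n a => le_of_eq rfl }
    have hext : ExtendsRep idC ι (σ 1) := by
      refine ⟨fun x => rfl, fun x => ?_⟩
      show ι.e x = ((c 1 : ℂ)) • ι.e x
      rw [hc1, Complex.ofReal_one, one_smul]
    have h2 : φ 1 = idC := ((hA.2 A (σ 1)).choose_spec.2 idC hext).symm
    intro a
    show (φ 1).toHom a = a
    rw [h2]
    rfl
  · -- range of φ 0
    have hc0 : c 0 = 0 := hcid 0 ⟨le_refl 0, zero_le_one⟩
    have hgen : ∀ a : A.carrier,
        a ∈ closure ((NonUnitalAlgebra.adjoin ℂ (Set.range ι.v ∪ Set.range ι.e) :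
          NonUnitalSubalgebra ℂ A.carrier) : Set A.carrier) := fun a => by
      rw [hA.1]; trivial
    apply Set.Subset.antisymm
    · rintro _ ⟨a, rfl⟩
      have hmap : ∀ b ∈ (NonUnitalAlgebra.adjoin ℂ (Set.range ι.v ∪ Set.range ι.e) :
          NonUnitalSubalgebra ℂ A.carrier),
          (φ 0).toHom b ∈ (NonUnitalAlgebra.adjoin ℂ (Set.range ι.v) :
            NonUnitalSubalgebra ℂ A.carrier) := by
        intro b hb
        induction hb using NonUnitalAlgebra.adjoin_induction with
        | mem x hx =>
          rcases hx with ⟨y, rfl⟩ | ⟨y, rfl⟩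
          · rw [hφv]
            exact NonUnitalAlgebra.subset_adjoin ℂ ⟨y, rfl⟩
          · rw [hφe, hc0]
            simp only [Complex.ofReal_zero, zero_smul]
            exact zero_mem _
        | add x y hx hy ihx ihy => rw [map_add]; exact add_mem ihx ihy
        | zero => rw [map_zero]; exact zero_mem _
        | mul x y hx hy ihx ihy => rw [map_mul]; exact mul_mem ihx ihy
        | smul r x hx ihx => rw [map_smul]; exact SMulMemClass.smul_mem r ihx
      have h1 : (φ 0).toHom a ∈ closure ((NonUnitalAlgebra.adjoin ℂ (Set.range ι.v) :
          NonUnitalSubalgebra ℂ A.carrier) : Set A.carrier) := by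
        have h2 := (φ 0).continuous.continuousOn (s := Set.univ)
        have h3 : (φ 0).toHom a ∈ (φ 0).toHom '' closure
            ((NonUnitalAlgebra.adjoin ℂ (Set.range ι.v ∪ Set.range ι.e) :
              NonUnitalSubalgebra ℂ A.carrier) : Set A.carrier) :=
          ⟨a, hgen a, rfl⟩
        have h4 := (image_closure_subset_closure_image (f := ⇑(φ 0).toHom)
          (φ 0).continuous) h3
        exact closure_mono (Set.image_subset_iff.2 hmap) h4
      exact h1
    · intro b hb
      -- φ 0 fixes the closed vertex algebra pointwise
      have hfix : ∀ x ∈ closure ((NonUnitalAlgebra.adjoin ℂ (Set.range ι.v) :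
          NonUnitalSubalgebra ℂ A.carrier) : Set A.carrier), (φ 0).toHom x = x := by
        have hcl : IsClosed {x : A.carrier | (φ 0).toHom x = x} :=
          isClosed_eq (φ 0).continuous continuous_id
        have hsub : ((NonUnitalAlgebra.adjoin ℂ (Set.range ι.v) :
            NonUnitalSubalgebra ℂ A.carrier) : Set A.carrier) ⊆
            {x : A.carrier | (φ 0).toHom x = x} := by
          intro x hx
          induction hx using NonUnitalAlgebra.adjoin_induction with
          | mem x hx => rcases hx with ⟨y, rfl⟩; exact hφv 0 y
          | add x y hx hy ihx ihy =>
            show (φ 0).toHom (x + y) = x + y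
            rw [map_add, show (φ 0).toHom x = x from ihx, show (φ 0).toHom y = y from ihy]
          | zero => show (φ 0).toHom 0 = 0; exact map_zero _
          | mul x y hx hy ihx ihy =>
            show (φ 0).toHom (x * y) = x * y
            rw [map_mul, show (φ 0).toHom x = x from ihx, show (φ 0).toHom y = y from ihy]
          | smul r x hx ihx =>
            show (φ 0).toHom (r • x) = r • x
            rw [map_smul, show (φ 0).toHom x = x from ihx]
        exact fun x hx => closure_minimal hsub hcl hx
      exact ⟨b, hfix b hb⟩
  · -- continuity
    intro a
    have hdense := hA.1
    -- continuity for elements of the dense subalgebra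
    have hcont1 : ∀ b ∈ (NonUnitalAlgebra.adjoin ℂ (Set.range ι.v ∪ Set.range ι.e) :
        NonUnitalSubalgebra ℂ A.carrier), Continuous (fun t => (φ t).toHom b) := by
      intro b hb
      induction hb using NonUnitalAlgebra.adjoin_induction with
      | mem x hx =>
        rcases hx with ⟨y, rfl⟩ | ⟨y, rfl⟩
        · simp only [hφv]; exact continuous_const
        · simp only [hφe]
          exact (Complex.continuous_ofReal.comp hccont).smul continuous_const
      | add x y hx hy ihx ihy => simp only [map_add]; exact ihx.add ihy
      | zero => simp only [map_zero]; exact continuous_const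
      | mul x y hx hy ihx ihy => simp only [map_mul]; exact ihx.mul ihy
      | smul r x hx ihx => simp only [map_smul]; exact ihx.const_smul r
    -- a is a limit of elements of the dense subalgebra
    have ha : a ∈ closure ((NonUnitalAlgebra.adjoin ℂ (Set.range ι.v ∪ Set.range ι.e) :
        NonUnitalSubalgebra ℂ A.carrier) : Set A.carrier) := by rw [hdense]; trivial
    rcases mem_closure_iff_seq_limit.1 ha with ⟨u, hu, hulim⟩
    have hcont : Continuous (fun t => (φ t).toHom a) := by
      refine TendstoUniformly.continuous (F := fun n t => (φ t).toHom (u n))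
        (p := Filter.atTop) ?_ (Filter.Eventually.frequently (Filter.Eventually.of_forall fun n => hcont1 _ (hu n)))
      rw [Metric.tendstoUniformly_iff]
      intro ε hε
      have : ∀ᶠ n in Filter.atTop, dist (u n) a < ε :=
        hulim (Metric.ball_mem_nhds a hε)
      filter_upwards [this] with n hn t
      calc dist ((φ t).toHom a) ((φ t).toHom (u n))
          = ‖(φ t).toHom (a - u n)‖ := by rw [dist_eq_norm, ← map_sub]
        _ ≤ ‖a - u n‖ := (φ t).norm_apply_le _
        _ < ε := by rw [← dist_eq_norm]; exact dist_comm (u n) a ▸ hn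
    exact hcont.continuousOn

end
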